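/- Let X ⊆ ℝ^d be a nonempty closed convex set with metric projection P_X, and let f_1, …, f_n : ℝ^d → ℝ be differentiable, μ-strongly convex and L-smooth with 0 < μ ≤ L; set f = (1/n)Σ_l f_l and let x* be the unique minimizer of f over X. Let φ, φ', π ∈ ℝⁿ be positive stochastic vectors, let R be a row-stochastic n×n matrix with φ'ᵀR = φᵀ, let 0 < η < 1/(nL) and λ ∈ (0, 1], and let x_1, …, x_n, y_1, …, y_n ∈ ℝ^d satisfy Σ_l y_l = Σ_l ∇f_l(x_l). Define z_i = (1 − λ)x_i + λ P_X(x_i − η y_i) and x⁺_i = Σ_j R_{ij} z_j. Then √(Σ_i φ'_i ‖x⁺_i − x*‖²) ≤ q_π(η, λ)·√(Σ_i φ_i ‖x_i − x*‖²) + ηλL·√(n/min_i φ_i)·D(x, φ) + ηλ·S(y, π), where q_π(η, λ) = max_i (1 − λ·η n π_i·μ). -/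

import Mathlib

open Finset RealInnerProductSpace

/-- Consensus error `D(u, a) = √(Σ_i Σ_j a_i a_j ‖u_i − u_j‖²)`. -/
noncomputable def Derr {n d : ℕ} (a : Fin n → ℝ) (u : Fin n → EuclideanSpace ℝ (Fin d)) : ℝ :=
  Real.sqrt (∑ i, ∑ j, a i * a j * ‖u i - u j‖ ^ 2)

/-- Gradient-tracking error `S(y, a) = √(Σ_i a_i ‖y_i/a_i − Σ_l y_l‖²)`. -/
noncomputable def Serr {n d : ℕ} (a : Fin n → ℝ) (y : Fin n → EuclideanSpace ℝ (Fin d)) : ℝ :=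
  Real.sqrt (∑ i, a i * ‖(a i)⁻¹ • y i - (∑ l, y l)‖ ^ 2)

/-- Minimum entry of a vector over `Fin n`, `n ≠ 0`. -/
noncomputable def fmin {n : ℕ} [NeZero n] (a : Fin n → ℝ) : ℝ :=
  Finset.univ.inf' Finset.univ_nonempty a

/-- `q_π(η, λ) = max_i (1 − λ·ηnπ_i·μ)`. -/
noncomputable def qmax {n : ℕ} [NeZero n] (π : Fin n → ℝ) (μ η lam : ℝ) : ℝ :=
  Finset.univ.sup' Finset.univ_nonempty (fun i => 1 - lam * (η * n * π i) * μ)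

/-!
The sum `h = Σₗ fₗ` is `nμ`-strongly convex with `nL`-Lipschitz gradient and is minimized over `X`
at `x*`, so `x*` is a fixed point of every projected gradient step `P_X(· - s ∇h)`. Co-coercivity
of `∇h` makes `u ↦ u - s ∇h(u)` a `(1 - s nμ)`-contraction when `s (nμ + nL) ≤ 2`, and `P_X` is
nonexpansive. Agent `j` performs such a step with `s = ηπⱼ` along `yⱼ/πⱼ` instead of `∇h(xⱼ)`; the
discrepancy is at most the tracking error `‖yⱼ/πⱼ - Σₗ yₗ‖` plus `L Σₗ ‖xₗ - xⱼ‖`, since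
`Σₗ yₗ = Σₗ ∇fₗ(xₗ)`. Hence `‖zⱼ - x*‖ ≤ q ‖xⱼ - x*‖ + ηλL Σₗ ‖xₗ - xⱼ‖ + ηλπⱼ ‖yⱼ/πⱼ - Σₗ yₗ‖`.
Mixing by `R` does not increase the weighted squared distance to `x*` (Jensen, with `φ'ᵀR = φᵀ`),
and Minkowski's inequality for the `φ`-weighted ℓ² norm splits the three contributions.
-/

section MetricProjection

variable {E : Type*} [NormedAddCommGroup E] [InnerProductSpace ℝ E]

def IsMetricProjection (X : Set E) (P : E → E) : Prop :=
  ∀ v, P v ∈ X ∧ ∀ u ∈ X, ‖v - P v‖ ≤ ‖v - u‖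

namespace IsMetricProjection

variable {X : Set E} {P : E → E}

theorem inner_sub_nonpos (hP : IsMetricProjection X P) (hX : Convex ℝ X) (v : E) {u : E}
    (hu : u ∈ X) : ⟪v - P v, u - P v⟫ ≤ 0 := by
  have : Nonempty X := ⟨⟨u, hu⟩⟩
  refine (norm_eq_iInf_iff_real_inner_le_zero hX (hP v).1).1 ?_ u hu
  exact le_antisymm (le_ciInf fun w => (hP v).2 w w.2)
    (ciInf_le (f := fun w : X => ‖v - (w : E)‖) ⟨0, by rintro _ ⟨w, rfl⟩; exact norm_nonneg _⟩
      ⟨P v, (hP v).1⟩)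

theorem norm_sub_le (hP : IsMetricProjection X P) (hX : Convex ℝ X) (a b : E) :
    ‖P a - P b‖ ≤ ‖a - b‖ := by
  have ha := hP.inner_sub_nonpos hX a (hP b).1
  have hb := hP.inner_sub_nonpos hX b (hP a).1
  have hsq : ‖P a - P b‖ ^ 2 ≤ ⟪a - b, P a - P b⟫ := by
    have : ⟪a - b, P a - P b⟫ = ‖P a - P b‖ ^ 2 - ⟪a - P a, P b - P a⟫ - ⟪b - P b, P a - P b⟫ := by
      rw [← real_inner_self_eq_norm_sq]
      simp only [inner_sub_left, inner_sub_right, real_inner_comm]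
      ring
    linarith
  have := hsq.trans (real_inner_le_norm _ _)
  nlinarith [norm_nonneg (P a - P b), norm_nonneg (a - b)]

theorem apply_eq_of_inner_nonpos (hP : IsMetricProjection X P) (hX : Convex ℝ X) {c x : E}
    (hx : x ∈ X) (hc : ∀ u ∈ X, ⟪c - x, u - x⟫ ≤ 0) : P c = x := by
  have h1 := hP.inner_sub_nonpos hX c hx
  have h2 := hc (P c) (hP c).1
  have : ⟪c - P c, x - P c⟫ + ⟪c - x, P c - x⟫ = ‖P c - x‖ ^ 2 := by
    rw [← real_inner_self_eq_norm_sq]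
    simp only [inner_sub_left, inner_sub_right, real_inner_comm]
    ring
  rw [← sub_eq_zero, ← norm_eq_zero]
  nlinarith [norm_nonneg (P c - x)]

end IsMetricProjection

end MetricProjection

section GradientInequalities

variable {E : Type*} [NormedAddCommGroup E] [InnerProductSpace ℝ E] [CompleteSpace E]
  {h : E → ℝ} {g : E → E}

theorem hasDerivAt_comp_add_smul_of_hasGradientAt (hg : ∀ x, HasGradientAt h (g x) x)
    (a v : E) (t : ℝ) :
    HasDerivAt (fun t : ℝ => h (a + t • v)) ⟪g (a + t • v), v⟫ t := by
  have hline : HasDerivAt (fun t : ℝ => a + t • v) v t := by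
    simpa using ((hasDerivAt_id t).smul_const v).const_add a
  simpa [Function.comp_def] using
    (hasGradientAt_iff_hasFDerivAt.1 (hg (a + t • v))).comp_hasDerivAt t hline

theorem HasGradientAt.neg {x g' : E} (hg : HasGradientAt h g' x) :
    HasGradientAt (fun x => -h x) (-g') x := by
  rw [hasGradientAt_iff_hasFDerivAt, map_neg]
  exact (hasGradientAt_iff_hasFDerivAt.1 hg).neg

theorem le_add_inner_add_of_inner_sub_le (hg : ∀ x, HasGradientAt h (g x) x) {K : ℝ}
    (hK : ∀ u v, ⟪g u - g v, u - v⟫ ≤ K * ‖u - v‖ ^ 2) (a b : E) :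
    h b ≤ h a + ⟪g a, b - a⟫ + K / 2 * ‖b - a‖ ^ 2 := by
  set χ : ℝ → ℝ := fun t => h (a + t • (b - a)) - t * ⟪g a, b - a⟫ - K / 2 * t ^ 2 * ‖b - a‖ ^ 2
  have hχ : ∀ t, HasDerivAt χ (⟪g (a + t • (b - a)), b - a⟫ - ⟪g a, b - a⟫
      - K * t * ‖b - a‖ ^ 2) t := fun t => by
    have hquad : HasDerivAt (fun t : ℝ => K / 2 * t ^ 2 * ‖b - a‖ ^ 2) (K * t * ‖b - a‖ ^ 2) t :=
      (((hasDerivAt_pow 2 t).const_mul (K / 2)).mul_const _).congr_deriv (by push_cast; ring)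
    exact ((hasDerivAt_comp_add_smul_of_hasGradientAt hg a (b - a) t).fun_sub
      (hasDerivAt_mul_const ⟪g a, b - a⟫)).fun_sub hquad
  have hanti : AntitoneOn χ (Set.Icc 0 1) := by
    refine antitoneOn_of_deriv_nonpos (convex_Icc 0 1)
      (fun t _ => (hχ t).continuousAt.continuousWithinAt)
      (fun t _ => (hχ t).differentiableAt.differentiableWithinAt) fun t ht => ?_
    rw [interior_Icc] at ht
    have hstep := hK (a + t • (b - a)) a
    rw [add_sub_cancel_left, real_inner_smul_right, norm_smul, mul_pow, Real.norm_eq_abs,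
      sq_abs] at hstep
    rw [(hχ t).deriv, ← inner_sub_left]
    nlinarith [ht.1]
  have := hanti (Set.left_mem_Icc.2 zero_le_one) (Set.right_mem_Icc.2 zero_le_one) zero_le_one
  norm_num [χ] at this
  linarith

theorem add_inner_add_le_of_le_inner_sub (hg : ∀ x, HasGradientAt h (g x) x) {c : ℝ}
    (hc : ∀ u v, c * ‖u - v‖ ^ 2 ≤ ⟪g u - g v, u - v⟫) (a b : E) :
    h a + ⟪g a, b - a⟫ + c / 2 * ‖b - a‖ ^ 2 ≤ h b := by
  have := le_add_inner_add_of_inner_sub_le (h := fun x => -h x) (g := fun x => -g x)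
    (fun x => (hg x).neg) (K := -c) (fun u v => by
      rw [← neg_sub', inner_neg_left]; linarith [hc u v]) a b
  rw [inner_neg_left] at this
  linarith

theorem add_inner_add_norm_sq_le_of_monotone_of_inner_sub_le
    (hg : ∀ x, HasGradientAt h (g x) x) (hmono : ∀ u v, 0 ≤ ⟪g u - g v, u - v⟫) {K : ℝ}
    (hK0 : 0 < K) (hK : ∀ u v, ⟪g u - g v, u - v⟫ ≤ K * ‖u - v‖ ^ 2) (a b : E) :
    h a + ⟪g a, b - a⟫ + ‖g b - g a‖ ^ 2 / (2 * K) ≤ h b := by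
  -- test the two quadratic bounds at the point reached by a gradient step from `b`
  set w := b - K⁻¹ • (g b - g a)
  have hlow := add_inner_add_le_of_le_inner_sub hg (c := 0) (by simpa using hmono) a w
  have hup := le_add_inner_add_of_inner_sub_le hg hK b w
  have hwa : w - a = (b - a) - K⁻¹ • (g b - g a) := by simp only [w]; abel
  have hwb : w - b = -(K⁻¹ • (g b - g a)) := by simp only [w]; abel
  rw [hwa, inner_sub_right, real_inner_smul_right, zero_div, zero_mul, add_zero] at hlow
  rw [hwb, inner_neg_right, real_inner_smul_right, norm_neg, norm_smul, mul_pow,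
    Real.norm_eq_abs, sq_abs] at hup
  have hgrad : K⁻¹ * ⟪g b, g b - g a⟫ - K⁻¹ * ⟪g a, g b - g a⟫
      = 2 * (‖g b - g a‖ ^ 2 / (2 * K)) := by
    rw [← mul_sub, ← inner_sub_left, real_inner_self_eq_norm_sq]
    field_simp
  have hquad : K / 2 * (K⁻¹ ^ 2 * ‖g b - g a‖ ^ 2) = ‖g b - g a‖ ^ 2 / (2 * K) := by field_simp
  linarith

theorem norm_sq_le_mul_inner_of_monotone_of_inner_sub_le
    (hg : ∀ x, HasGradientAt h (g x) x) (hmono : ∀ u v, 0 ≤ ⟪g u - g v, u - v⟫) {K : ℝ}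
    (hK0 : 0 < K) (hK : ∀ u v, ⟪g u - g v, u - v⟫ ≤ K * ‖u - v‖ ^ 2) (u v : E) :
    ‖g u - g v‖ ^ 2 ≤ K * ⟪g u - g v, u - v⟫ := by
  have huv := add_inner_add_norm_sq_le_of_monotone_of_inner_sub_le hg hmono hK0 hK u v
  have hvu := add_inner_add_norm_sq_le_of_monotone_of_inner_sub_le hg hmono hK0 hK v u
  rw [norm_sub_rev (g v)] at huv
  have hsum : ‖g u - g v‖ ^ 2 / K ≤ ⟪g u - g v, u - v⟫ := by
    have : ⟪g u - g v, u - v⟫ = -(⟪g u, v - u⟫ + ⟪g v, u - v⟫) := by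
      rw [inner_sub_left, ← neg_sub u v, inner_neg_right]; ring
    have : ‖g u - g v‖ ^ 2 / K = 2 * (‖g u - g v‖ ^ 2 / (2 * K)) := by field_simp
    linarith
  rwa [div_le_iff₀ hK0, mul_comm] at hsum

theorem hasGradientAt_sub_half_mul_norm_sq (hg : ∀ x, HasGradientAt h (g x) x) (m : ℝ) (x : E) :
    HasGradientAt (fun x => h x - m / 2 * ‖x‖ ^ 2) (g x - m • x) x := by
  rw [hasGradientAt_iff_hasFDerivAt]
  refine ((hasGradientAt_iff_hasFDerivAt.1 (hg x)).fun_sub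
    ((hasStrictFDerivAt_norm_sq x).hasFDerivAt.const_mul (m / 2))).congr_fderiv ?_
  ext y
  simp [InnerProductSpace.toDual_apply_apply]
  ring

theorem norm_sub_smul_sq_le_mul_inner (hg : ∀ x, HasGradientAt h (g x) x) {m M : ℝ}
    (hm : 0 ≤ m) (hmM : m ≤ M) (hmono : ∀ u v, m * ‖u - v‖ ^ 2 ≤ ⟪g u - g v, u - v⟫)
    (hlip : ∀ u v, ‖g u - g v‖ ≤ M * ‖u - v‖) (u v : E) :
    ‖(g u - g v) - m • (u - v)‖ ^ 2 ≤ (M - m) * ⟪(g u - g v) - m • (u - v), u - v⟫ := by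
  have hinner : ∀ u v, ⟪(g u - g v) - m • (u - v), u - v⟫
      = ⟪g u - g v, u - v⟫ - m * ‖u - v‖ ^ 2 := fun u v => by
    rw [inner_sub_left, real_inner_smul_left, real_inner_self_eq_norm_sq]
  have hupper : ∀ u v, ⟪g u - g v, u - v⟫ ≤ M * ‖u - v‖ ^ 2 := fun u v => by
    have := mul_le_mul_of_nonneg_right (hlip u v) (norm_nonneg (u - v))
    nlinarith [real_inner_le_norm (g u - g v) (u - v)]
  rcases hmM.lt_or_eq with hlt | rfl
  · -- `x ↦ h x - m/2 ‖x‖²` is convex and `(M - m)`-smooth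
    have hshift : ∀ u v, (g u - m • u) - (g v - m • v) = (g u - g v) - m • (u - v) :=
      fun u v => by rw [smul_sub]; abel
    have := norm_sq_le_mul_inner_of_monotone_of_inner_sub_le
      (hasGradientAt_sub_half_mul_norm_sq hg m) (K := M - m)
      (fun u v => by rw [hshift, hinner]; linarith [hmono u v]) (sub_pos.2 hlt)
      (fun u v => by rw [hshift, hinner]; linarith [hupper u v]) u v
    rwa [hshift] at this
  · rw [sub_self, zero_mul, norm_sub_sq_real, norm_smul, mul_pow, Real.norm_eq_abs, sq_abs,
      real_inner_smul_right]
    have := mul_le_mul_of_nonneg_left (hmono u v) hm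
    have := pow_le_pow_left₀ (norm_nonneg _) (hlip u v) 2
    rw [mul_pow] at this
    linarith

theorem norm_sub_smul_sub_le_of_strongly_monotone (hg : ∀ x, HasGradientAt h (g x) x)
    {m M : ℝ} (hm : 0 ≤ m) (hmM : m ≤ M)
    (hmono : ∀ u v, m * ‖u - v‖ ^ 2 ≤ ⟪g u - g v, u - v⟫)
    (hlip : ∀ u v, ‖g u - g v‖ ≤ M * ‖u - v‖) {s : ℝ} (hs : 0 ≤ s) (hsM : s * (m + M) ≤ 2)
    (u v : E) :
    ‖(u - v) - s • (g u - g v)‖ ≤ (1 - s * m) * ‖u - v‖ := by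
  set w := u - v
  set e := (g u - g v) - m • w
  have hcoco : ‖e‖ ^ 2 ≤ (M - m) * ⟪e, w⟫ := norm_sub_smul_sq_le_mul_inner hg hm hmM hmono hlip u v
  have hew : 0 ≤ ⟪e, w⟫ := by
    rw [inner_sub_left, real_inner_smul_left, real_inner_self_eq_norm_sq]
    linarith [hmono u v]
  have hsm : 0 ≤ 1 - s * m := by nlinarith
  have hsplit : w - s • (g u - g v) = (1 - s * m) • w - s • e := by
    simp only [e, smul_sub, sub_smul, one_smul, smul_smul]; abel
  have hsq : ‖(1 - s * m) • w - s • e‖ ^ 2 ≤ ((1 - s * m) * ‖w‖) ^ 2 := by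
    rw [norm_sub_sq_real, norm_smul, norm_smul, real_inner_smul_left, real_inner_smul_right,
      Real.norm_eq_abs, Real.norm_eq_abs, mul_pow, mul_pow, sq_abs, sq_abs, real_inner_comm]
    nlinarith [mul_nonneg hs hew, mul_nonneg (mul_nonneg hs hs) hew]
  rw [hsplit]
  exact (pow_le_pow_iff_left₀ (norm_nonneg _) (by positivity) two_ne_zero).1 hsq

end GradientInequalities

section ProjectedGradient

variable {E : Type*} [NormedAddCommGroup E] [InnerProductSpace ℝ E] [CompleteSpace E]
  {X : Set E} {P : E → E} {h : E → ℝ}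

theorem hasGradientAt_finset_sum {ι : Type*} (s : Finset ι) {f : ι → E → ℝ} {g : ι → E} {x : E}
    (hf : ∀ i ∈ s, HasGradientAt (f i) (g i) x) :
    HasGradientAt (fun v => ∑ i ∈ s, f i v) (∑ i ∈ s, g i) x := by
  rw [hasGradientAt_iff_hasFDerivAt, map_sum]
  exact HasFDerivAt.fun_sum fun i hi => hasGradientAt_iff_hasFDerivAt.1 (hf i hi)

theorem IsMinOn.inner_sub_nonneg_of_hasGradientAt {x g' u : E} (hmin : IsMinOn h X x)
    (hX : Convex ℝ X) (hx : x ∈ X) (hg : HasGradientAt h g' x) (hu : u ∈ X) :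
    0 ≤ ⟪g', u - x⟫ :=
  hmin.localize.hasFDerivWithinAt_nonneg (hasGradientAt_iff_hasFDerivAt.1 hg).hasFDerivWithinAt
    (sub_mem_posTangentConeAt_of_segment_subset (hX.segment_subset hx hu))

theorem norm_lazy_projected_gradient_step_sub_le {g : E → E}
    (hP : IsMetricProjection X P) (hX : Convex ℝ X) (hg : ∀ x, HasGradientAt h (g x) x)
    {m M : ℝ} (hm : 0 ≤ m) (hmM : m ≤ M) (hmono : ∀ u v, m * ‖u - v‖ ^ 2 ≤ ⟪g u - g v, u - v⟫)
    (hlip : ∀ u v, ‖g u - g v‖ ≤ M * ‖u - v‖) {xs : E} (hxs : xs ∈ X)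
    (hopt : ∀ u ∈ X, 0 ≤ ⟪g xs, u - xs⟫) {s lam : ℝ} (hs : 0 ≤ s) (hsM : s * (m + M) ≤ 2)
    (hlam0 : 0 ≤ lam) (hlam1 : lam ≤ 1) (x v : E) :
    ‖(1 - lam) • x + lam • P (x - s • v) - xs‖
      ≤ (1 - lam * (s * m)) * ‖x - xs‖ + lam * (s * ‖v - g x‖) := by
  have hfix : P (xs - s • g xs) = xs := hP.apply_eq_of_inner_nonpos hX hxs fun u hu => by
    rw [sub_sub_cancel_left, inner_neg_left, real_inner_smul_left]
    nlinarith [hopt u hu]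
  have hproj : ‖P (x - s • v) - xs‖ ≤ (1 - s * m) * ‖x - xs‖ + s * ‖v - g x‖ :=
    calc ‖P (x - s • v) - xs‖ = ‖P (x - s • v) - P (xs - s • g xs)‖ := by rw [hfix]
      _ ≤ ‖(x - s • v) - (xs - s • g xs)‖ := hP.norm_sub_le hX _ _
      _ = ‖((x - xs) - s • (g x - g xs)) - s • (v - g x)‖ := by congr 1; module
      _ ≤ ‖(x - xs) - s • (g x - g xs)‖ + ‖s • (v - g x)‖ := norm_sub_le _ _
      _ ≤ (1 - s * m) * ‖x - xs‖ + s * ‖v - g x‖ := by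
        rw [norm_smul, Real.norm_of_nonneg hs]
        gcongr
        exact norm_sub_smul_sub_le_of_strongly_monotone hg hm hmM hmono hlip hs hsM x xs
  calc ‖(1 - lam) • x + lam • P (x - s • v) - xs‖
      = ‖(1 - lam) • (x - xs) + lam • (P (x - s • v) - xs)‖ := by congr 1; module
    _ ≤ (1 - lam) * ‖x - xs‖ + lam * ‖P (x - s • v) - xs‖ := by
      refine (norm_add_le _ _).trans_eq ?_
      rw [norm_smul, norm_smul, Real.norm_of_nonneg (sub_nonneg.2 hlam1),
        Real.norm_of_nonneg hlam0]
    _ ≤ (1 - lam * (s * m)) * ‖x - xs‖ + lam * (s * ‖v - g x‖) := by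
      nlinarith [mul_le_mul_of_nonneg_left hproj hlam0]

end ProjectedGradient

theorem norm_sum_sub_sum_le {E ι : Type*} [SeminormedAddCommGroup E] [Fintype ι] {G : ι → E → E}
    {M : ℝ} (hlip : ∀ i u v, ‖G i u - G i v‖ ≤ M * ‖u - v‖) (x : ι → E) (u : E) :
    ‖∑ i, G i (x i) - ∑ i, G i u‖ ≤ M * ∑ i, ‖x i - u‖ := by
  rw [← sum_sub_distrib, mul_sum]
  exact (norm_sum_le _ _).trans (sum_le_sum fun i _ => hlip i _ _)

section GradientTracking

variable {E : Type*} [NormedAddCommGroup E] [InnerProductSpace ℝ E]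
  {ι : Type*} [Fintype ι] {G : ι → E → E}

theorem card_mul_mul_norm_sq_le_inner_sum_sub {m : ℝ}
    (hmono : ∀ i u v, m * ‖u - v‖ ^ 2 ≤ ⟪G i u - G i v, u - v⟫) (u v : E) :
    (Fintype.card ι * m) * ‖u - v‖ ^ 2 ≤ ⟪∑ i, G i u - ∑ i, G i v, u - v⟫ := by
  rw [← sum_sub_distrib, sum_inner]
  calc (Fintype.card ι * m) * ‖u - v‖ ^ 2 = ∑ _i : ι, m * ‖u - v‖ ^ 2 := by
        rw [sum_const, card_univ, nsmul_eq_mul, mul_assoc]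
    _ ≤ _ := sum_le_sum fun i _ => hmono i u v

theorem norm_lazy_tracking_step_sub_le [CompleteSpace E] {f : ι → E → ℝ}
    (hG : ∀ i x, HasGradientAt (f i) (G i x) x)
    {μ L : ℝ} (hμ : 0 ≤ μ) (hμL : μ ≤ L)
    (hstrong : ∀ i u v, μ * ‖u - v‖ ^ 2 ≤ ⟪G i u - G i v, u - v⟫)
    (hsmooth : ∀ i u v, ‖G i u - G i v‖ ≤ L * ‖u - v‖) {X : Set E} {P : E → E}
    (hP : IsMetricProjection X P) (hX : Convex ℝ X) {xs : E} (hxs : xs ∈ X)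
    (hmin : IsMinOn (fun v => ∑ i, f i v) X xs) {η p lam : ℝ} (hη : 0 ≤ η) (hp0 : 0 < p)
    (hp1 : p ≤ 1) (hηL : η * (Fintype.card ι * L) ≤ 1) (hlam0 : 0 ≤ lam) (hlam1 : lam ≤ 1)
    (x : ι → E) (w : E) (j : ι) :
    ‖(1 - lam) • x j + lam • P (x j - η • w) - xs‖
      ≤ (1 - lam * (η * Fintype.card ι * p) * μ) * ‖x j - xs‖
        + η * lam * L * ∑ l, ‖x l - x j‖ + η * lam * (p * ‖p⁻¹ • w - ∑ l, G l (x l)‖) := by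
  have hg : ∀ v, HasGradientAt (fun v => ∑ i, f i v) (∑ i, G i v) v := fun v =>
    hasGradientAt_finset_sum _ fun i _ => hG i v
  have hsM : η * p * (Fintype.card ι * μ + Fintype.card ι * L) ≤ 2 := by
    have hηp : η * p ≤ η := mul_le_of_le_one_right hη hp1
    have hN : (0 : ℝ) ≤ Fintype.card ι := Nat.cast_nonneg _
    nlinarith [mul_le_mul_of_nonneg_left hμL (mul_nonneg hη hN), mul_nonneg hN hμ]
  have hlip : ∀ u v, ‖∑ i, G i u - ∑ i, G i v‖ ≤ (Fintype.card ι * L) * ‖u - v‖ := fun u v =>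
    (norm_sum_sub_sum_le hsmooth (fun _ => u) v).trans_eq (by
      rw [sum_const, card_univ, nsmul_eq_mul]; ring)
  -- the local step uses the whole-network gradient with step size `η p` on `w / p`
  have hstep := norm_lazy_projected_gradient_step_sub_le hP hX hg
    (mul_nonneg (Nat.cast_nonneg _) hμ) (mul_le_mul_of_nonneg_left hμL (Nat.cast_nonneg _))
    (card_mul_mul_norm_sq_le_inner_sum_sub hstrong) hlip hxs
    (fun u hu => hmin.inner_sub_nonneg_of_hasGradientAt hX hxs (hg xs) hu)
    (mul_nonneg hη hp0.le) hsM hlam0 hlam1 (x j) (p⁻¹ • w)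
  rw [smul_smul, mul_assoc, mul_inv_cancel₀ hp0.ne', mul_one] at hstep
  have herr : ‖p⁻¹ • w - ∑ l, G l (x j)‖
      ≤ ‖p⁻¹ • w - ∑ l, G l (x l)‖ + L * ∑ l, ‖x l - x j‖ :=
    (norm_sub_le_norm_sub_add_norm_sub _ (∑ l, G l (x l)) _).trans
      (add_le_add le_rfl (norm_sum_sub_sum_le hsmooth x (x j)))
  refine hstep.trans ?_
  have hsum : 0 ≤ L * ∑ l, ‖x l - x j‖ :=
    mul_nonneg (hμ.trans hμL) (sum_nonneg fun _ _ => norm_nonneg _)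
  have := mul_le_mul_of_nonneg_left herr (mul_nonneg hlam0 (mul_nonneg hη hp0.le))
  nlinarith [mul_le_mul_of_nonneg_left hp1 (mul_nonneg (mul_nonneg hη hlam0) hsum)]

end GradientTracking

section WeightedSums

variable {ι : Type*} [Fintype ι]

theorem le_one_of_sum_eq_one {a : ι → ℝ} (ha : ∀ i, 0 ≤ a i) (hsum : ∑ i, a i = 1) (i : ι) :
    a i ≤ 1 :=
  hsum ▸ single_le_sum (fun j _ => ha j) (mem_univ i)

theorem sqrt_sum_mul_const_mul_sq (a t : ι → ℝ) (c : ℝ) :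
    √(∑ i, a i * (c * t i) ^ 2) = |c| * √(∑ i, a i * t i ^ 2) := by
  rw [← Real.sqrt_sq_eq_abs, ← Real.sqrt_mul (sq_nonneg c), mul_sum]
  congr 1
  exact sum_congr rfl fun i _ => by ring

theorem sqrt_sum_mul_add_sq_le {a : ι → ℝ} (ha : ∀ i, 0 ≤ a i) (b c : ι → ℝ) :
    √(∑ i, a i * (b i + c i) ^ 2) ≤ √(∑ i, a i * b i ^ 2) + √(∑ i, a i * c i ^ 2) := by
  have hnorm (t : ι → ℝ) :
      √(∑ i, a i * t i ^ 2) = ‖(WithLp.toLp 2 fun i => √(a i) * t i : EuclideanSpace ℝ ι)‖ := by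
    simp only [EuclideanSpace.norm_eq, Real.norm_eq_abs, sq_abs, mul_pow, Real.sq_sqrt (ha _)]
  rw [hnorm, hnorm, hnorm]
  refine le_of_eq_of_le ?_ (norm_add_le _ _)
  rw [← WithLp.toLp_add]
  simp only [Pi.add_def, mul_add]

theorem sum_mul_norm_sum_smul_sub_sq_le {E : Type*} [SeminormedAddCommGroup E] [NormedSpace ℝ E]
    {φ φ' : ι → ℝ} {R : ι → ι → ℝ} (hφ' : ∀ i, 0 ≤ φ' i) (hR : ∀ i j, 0 ≤ R i j)
    (hRrow : ∀ i, ∑ j, R i j = 1) (hφR : ∀ j, ∑ i, φ' i * R i j = φ j) (z : ι → E) (c : E) :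
    ∑ i, φ' i * ‖∑ j, R i j • z j - c‖ ^ 2 ≤ ∑ j, φ j * ‖z j - c‖ ^ 2 := by
  have hrow : ∀ i, ‖∑ j, R i j • z j - c‖ ^ 2 ≤ ∑ j, R i j * ‖z j - c‖ ^ 2 := fun i => by
    have hsub : ∑ j, R i j • z j - c = ∑ j, R i j • (z j - c) := by
      simp only [smul_sub, sum_sub_distrib, ← sum_smul, hRrow, one_smul]
    have htri : ‖∑ j, R i j • (z j - c)‖ ≤ ∑ j, R i j * ‖z j - c‖ :=
      (norm_sum_le _ _).trans_eq (sum_congr rfl fun j _ => by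
        rw [norm_smul, Real.norm_of_nonneg (hR i j)])
    rw [hsub]
    exact (pow_le_pow_left₀ (norm_nonneg _) htri 2).trans
      ((convexOn_pow 2).map_sum_le (fun j _ => hR i j) (hRrow i)
        fun j _ => Set.mem_Ici.2 (norm_nonneg _))
  calc ∑ i, φ' i * ‖∑ j, R i j • z j - c‖ ^ 2
      ≤ ∑ i, φ' i * ∑ j, R i j * ‖z j - c‖ ^ 2 := by gcongr with i; exacts [hφ' i, hrow i]
    _ = ∑ j, φ j * ‖z j - c‖ ^ 2 := by
      simp only [mul_sum, ← mul_assoc]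
      rw [sum_comm]
      simp only [← sum_mul, hφR]

theorem sqrt_sum_mul_sq_le_of_le_add_add {a t A B C : ι → ℝ} {α β γ : ℝ} (ha : ∀ i, 0 ≤ a i)
    (ht0 : ∀ i, 0 ≤ t i) (ht : ∀ i, t i ≤ α * A i + (β * B i + γ * C i)) (hα : 0 ≤ α)
    (hβ : 0 ≤ β) (hγ : 0 ≤ γ) :
    √(∑ i, a i * t i ^ 2)
      ≤ α * √(∑ i, a i * A i ^ 2) + β * √(∑ i, a i * B i ^ 2) + γ * √(∑ i, a i * C i ^ 2) := by
  calc √(∑ i, a i * t i ^ 2) ≤ √(∑ i, a i * (α * A i + (β * B i + γ * C i)) ^ 2) := by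
        gcongr with i
        exacts [ha i, ht0 i, ht i]
    _ ≤ √(∑ i, a i * (α * A i) ^ 2)
          + (√(∑ i, a i * (β * B i) ^ 2) + √(∑ i, a i * (γ * C i) ^ 2)) :=
        (sqrt_sum_mul_add_sq_le ha _ _).trans (add_le_add le_rfl (sqrt_sum_mul_add_sq_le ha _ _))
    _ = _ := by
        rw [sqrt_sum_mul_const_mul_sq, sqrt_sum_mul_const_mul_sq, sqrt_sum_mul_const_mul_sq,
          abs_of_nonneg hα, abs_of_nonneg hβ, abs_of_nonneg hγ, add_assoc]

end WeightedSums

section NetworkErrors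

variable {n d : ℕ}

theorem fmin_pos [NeZero n] {a : Fin n → ℝ} (ha : ∀ i, 0 < a i) : 0 < fmin a :=
  (lt_inf'_iff _).2 fun i _ => ha i

theorem fmin_le [NeZero n] (a : Fin n → ℝ) (i : Fin n) : fmin a ≤ a i :=
  inf'_le _ (mem_univ i)

theorem le_qmax [NeZero n] (π : Fin n → ℝ) (μ η lam : ℝ) (i : Fin n) :
    1 - lam * (η * n * π i) * μ ≤ qmax π μ η lam :=
  le_sup' (fun i => 1 - lam * (η * n * π i) * μ) (mem_univ i)

theorem qmax_nonneg [NeZero n] {π : Fin n → ℝ} {μ L η lam : ℝ} (hπ0 : ∀ i, 0 ≤ π i)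
    (hπ1 : ∀ i, π i ≤ 1) (hμ : 0 ≤ μ) (hμL : μ ≤ L) (hη : 0 ≤ η) (hηL : η * (n * L) ≤ 1)
    (hlam1 : lam ≤ 1) : 0 ≤ qmax π μ η lam := by
  refine le_trans ?_ (le_qmax π μ η lam 0)
  have : lam * (η * n * π 0) * μ ≤ 1 * (η * n * 1) * L := by
    gcongr
    exacts [mul_nonneg (mul_nonneg hη (Nat.cast_nonneg n)) (hπ0 0), hπ1 0]
  linarith

theorem sqrt_sum_mul_sq_sum_norm_sub_le [NeZero n] {φ : Fin n → ℝ} (hφ : ∀ i, 0 < φ i)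
    (x : Fin n → EuclideanSpace ℝ (Fin d)) :
    √(∑ j, φ j * (∑ l, ‖x l - x j‖) ^ 2) ≤ √(n / fmin φ) * Derr φ x := by
  have hmin := fmin_pos hφ
  rw [Derr, ← Real.sqrt_mul (div_nonneg (Nat.cast_nonneg _) hmin.le)]
  refine Real.sqrt_le_sqrt ?_
  calc ∑ j, φ j * (∑ l, ‖x l - x j‖) ^ 2 ≤ ∑ j, φ j * (n * ∑ l, ‖x l - x j‖ ^ 2) := by
        gcongr with j
        · exact (hφ j).le
        · simpa using sq_sum_le_card_mul_sum_sq (s := univ) (f := fun l => ‖x l - x j‖)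
    _ ≤ ∑ j, φ j * (n * ∑ l, φ l / fmin φ * ‖x l - x j‖ ^ 2) := by
        gcongr with j l
        · exact (hφ j).le
        · exact le_mul_of_one_le_left (sq_nonneg _) ((one_le_div hmin).2 (fmin_le φ l))
    _ = n / fmin φ * ∑ i, ∑ j, φ i * φ j * ‖x i - x j‖ ^ 2 := by
        simp only [mul_sum]
        refine sum_congr rfl fun j _ => sum_congr rfl fun l _ => ?_
        rw [norm_sub_rev]
        ring

theorem sqrt_sum_mul_sq_mul_norm_le_Serr {φ π : Fin n → ℝ}
    (hφ1 : ∀ i, φ i ≤ 1) (hπ0 : ∀ i, 0 ≤ π i) (hπ1 : ∀ i, π i ≤ 1)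
    (y : Fin n → EuclideanSpace ℝ (Fin d)) :
    √(∑ j, φ j * (π j * ‖(π j)⁻¹ • y j - ∑ l, y l‖) ^ 2) ≤ Serr π y := by
  refine Real.sqrt_le_sqrt (sum_le_sum fun j _ => ?_)
  have hφπ : φ j * π j ≤ 1 := mul_le_one₀ (hφ1 j) (hπ0 j) (hπ1 j)
  calc φ j * (π j * ‖(π j)⁻¹ • y j - ∑ l, y l‖) ^ 2
      = (φ j * π j) * (π j * ‖(π j)⁻¹ • y j - ∑ l, y l‖ ^ 2) := by ring
    _ ≤ π j * ‖(π j)⁻¹ • y j - ∑ l, y l‖ ^ 2 :=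
      mul_le_of_le_one_left (mul_nonneg (hπ0 j) (sq_nonneg _)) hφπ

end NetworkErrors

theorem optimality_gap_bound_general {n d : ℕ} [NeZero n]
    (X : Set (EuclideanSpace ℝ (Fin d)))
    (hXconvex : Convex ℝ X)
    (P : EuclideanSpace ℝ (Fin d) → EuclideanSpace ℝ (Fin d))
    (hPmem : ∀ v, P v ∈ X)
    (hPproj : ∀ v, ∀ u ∈ X, ‖v - P v‖ ≤ ‖v - u‖)
    (f : Fin n → EuclideanSpace ℝ (Fin d) → ℝ)
    (hfdiff : ∀ i, Differentiable ℝ (f i))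
    (μ L : ℝ) (hμ : 0 < μ) (hμL : μ ≤ L)
    (hstrong : ∀ i u v, μ * ‖u - v‖ ^ 2 ≤ ⟪gradient (f i) u - gradient (f i) v, u - v⟫)
    (hsmooth : ∀ i u v, ‖gradient (f i) u - gradient (f i) v‖ ≤ L * ‖u - v‖)
    (F : EuclideanSpace ℝ (Fin d) → ℝ)
    (hF : F = fun v => (1 / (n : ℝ)) * ∑ l, f l v)
    (xs : EuclideanSpace ℝ (Fin d)) (hxsmem : xs ∈ X)
    (hxsmin : ∀ u ∈ X, F xs ≤ F u)
    (φ φ' π : Fin n → ℝ)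
    (hφpos : ∀ i, 0 < φ i) (hφsum : ∑ i, φ i = 1)
    (hφ'pos : ∀ i, 0 < φ' i)
    (hπpos : ∀ i, 0 < π i) (hπsum : ∑ i, π i = 1)
    (R : Fin n → Fin n → ℝ)
    (hRnonneg : ∀ i j, 0 ≤ R i j) (hRrow : ∀ i, ∑ j, R i j = 1)
    (hφR : ∀ j, ∑ i, φ' i * R i j = φ j)
    (η lam : ℝ) (hη0 : 0 < η) (hη : η < 1 / (n * L)) (hlam0 : 0 < lam) (hlam1 : lam ≤ 1)
    (x y : Fin n → EuclideanSpace ℝ (Fin d))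
    (htrack : ∑ l, y l = ∑ l, gradient (f l) (x l))
    (z xplus : Fin n → EuclideanSpace ℝ (Fin d))
    (hz : ∀ i, z i = (1 - lam) • x i + lam • P (x i - η • y i))
    (hxplus : ∀ i, xplus i = ∑ j, R i j • z j) :
    Real.sqrt (∑ i, φ' i * ‖xplus i - xs‖ ^ 2)
      ≤ qmax π μ η lam * Real.sqrt (∑ i, φ i * ‖x i - xs‖ ^ 2)
        + η * lam * L * Real.sqrt ((n : ℝ) / fmin φ) * Derr φ x
        + η * lam * Serr π y := by
  have hL : 0 < L := hμ.trans_le hμL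
  have hn : (0 : ℝ) < n := Nat.cast_pos.2 (NeZero.pos n)
  have hηL : η * (n * L) ≤ 1 := ((lt_div_iff₀ (mul_pos hn hL)).1 (by simpa using hη)).le
  have hφ1 := le_one_of_sum_eq_one (fun i => (hφpos i).le) hφsum
  have hπ1 := le_one_of_sum_eq_one (fun i => (hπpos i).le) hπsum
  have hmin : IsMinOn (fun v => ∑ l, f l v) X xs := fun u hu =>
    le_of_mul_le_mul_left (by simpa only [hF] using hxsmin u hu) (one_div_pos.2 hn)
  have hagent : ∀ j, ‖z j - xs‖ ≤ qmax π μ η lam * ‖x j - xs‖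
      + (η * lam * L * ∑ l, ‖x l - x j‖ + η * lam * (π j * ‖(π j)⁻¹ • y j - ∑ l, y l‖)) := by
    intro j
    have hstep := norm_lazy_tracking_step_sub_le (fun i v => (hfdiff i v).hasGradientAt) hμ.le
      hμL hstrong hsmooth (fun v => ⟨hPmem v, hPproj v⟩) hXconvex hxsmem hmin hη0.le (hπpos j)
      (hπ1 j) (by simpa using hηL) hlam0.le hlam1 x (y j) j
    rw [Fintype.card_fin, ← htrack, ← hz] at hstep
    have := mul_le_mul_of_nonneg_right (le_qmax π μ η lam j) (norm_nonneg (x j - xs))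
    linarith
  calc √(∑ i, φ' i * ‖xplus i - xs‖ ^ 2) ≤ √(∑ j, φ j * ‖z j - xs‖ ^ 2) := by
        simp only [hxplus]
        exact Real.sqrt_le_sqrt (sum_mul_norm_sum_smul_sub_sq_le (fun i => (hφ'pos i).le)
          hRnonneg hRrow hφR z xs)
    _ ≤ qmax π μ η lam * √(∑ j, φ j * ‖x j - xs‖ ^ 2)
          + η * lam * L * √(∑ j, φ j * (∑ l, ‖x l - x j‖) ^ 2)
          + η * lam * √(∑ j, φ j * (π j * ‖(π j)⁻¹ • y j - ∑ l, y l‖) ^ 2) :=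
        sqrt_sum_mul_sq_le_of_le_add_add (fun i => (hφpos i).le) (fun _ => norm_nonneg _) hagent
          (qmax_nonneg (fun i => (hπpos i).le) hπ1 hμ.le hμL hη0.le hηL hlam1)
          (by positivity) (by positivity)
    _ ≤ _ := by
        rw [mul_assoc (η * lam * L)]
        gcongr
        · exact sqrt_sum_mul_sq_sum_norm_sub_le hφpos x
        · exact sqrt_sum_mul_sq_mul_norm_le_Serr hφ1 (fun i => (hπpos i).le) hπ1 y

/-- Optimality gap bound, Lemma `optimality-gap`. One step of Projected
Push-Pull consensus and lazy projected-gradient update satisfies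
`‖x⁺ − x*‖_{φ'} ≤ q_π(η,λ)·‖x − x*‖_φ + ηλL√(n/min φ)·D(x, φ) + ηλ·S(y, π)`. -/
theorem optimality_gap_bound {n d : ℕ} [NeZero n]
    (X : Set (EuclideanSpace ℝ (Fin d))) (hXne : X.Nonempty)
    (hXclosed : IsClosed X) (hXconvex : Convex ℝ X)
    (P : EuclideanSpace ℝ (Fin d) → EuclideanSpace ℝ (Fin d))
    (hPmem : ∀ v, P v ∈ X)
    (hPproj : ∀ v, ∀ u ∈ X, ‖v - P v‖ ≤ ‖v - u‖)
    (f : Fin n → EuclideanSpace ℝ (Fin d) → ℝ)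
    (hfdiff : ∀ i, Differentiable ℝ (f i))
    (μ L : ℝ) (hμ : 0 < μ) (hμL : μ ≤ L)
    (hstrong : ∀ i u v, μ * ‖u - v‖ ^ 2 ≤ ⟪gradient (f i) u - gradient (f i) v, u - v⟫)
    (hsmooth : ∀ i u v, ‖gradient (f i) u - gradient (f i) v‖ ≤ L * ‖u - v‖)
    (F : EuclideanSpace ℝ (Fin d) → ℝ)
    (hF : F = fun v => (1 / (n : ℝ)) * ∑ l, f l v)
    (xs : EuclideanSpace ℝ (Fin d)) (hxsmem : xs ∈ X)
    (hxsmin : ∀ u ∈ X, F xs ≤ F u)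
    (hxsuniq : ∀ u ∈ X, (∀ v ∈ X, F u ≤ F v) → u = xs)
    (φ φ' π : Fin n → ℝ)
    (hφpos : ∀ i, 0 < φ i) (hφsum : ∑ i, φ i = 1)
    (hφ'pos : ∀ i, 0 < φ' i) (hφ'sum : ∑ i, φ' i = 1)
    (hπpos : ∀ i, 0 < π i) (hπsum : ∑ i, π i = 1)
    (R : Fin n → Fin n → ℝ)
    (hRnonneg : ∀ i j, 0 ≤ R i j) (hRrow : ∀ i, ∑ j, R i j = 1)
    (hφR : ∀ j, ∑ i, φ' i * R i j = φ j)
    (η lam : ℝ) (hη0 : 0 < η) (hη : η < 1 / (n * L)) (hlam0 : 0 < lam) (hlam1 : lam ≤ 1)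
    (x y : Fin n → EuclideanSpace ℝ (Fin d))
    (htrack : ∑ l, y l = ∑ l, gradient (f l) (x l))
    (z xplus : Fin n → EuclideanSpace ℝ (Fin d))
    (hz : ∀ i, z i = (1 - lam) • x i + lam • P (x i - η • y i))
    (hxplus : ∀ i, xplus i = ∑ j, R i j • z j) :
    Real.sqrt (∑ i, φ' i * ‖xplus i - xs‖ ^ 2)
      ≤ qmax π μ η lam * Real.sqrt (∑ i, φ i * ‖x i - xs‖ ^ 2)
        + η * lam * L * Real.sqrt ((n : ℝ) / fmin φ) * Derr φ x
        + η * lam * Serr π y :=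
  optimality_gap_bound_general X hXconvex P hPmem hPproj f hfdiff μ L hμ hμL hstrong hsmooth F hF xs
    hxsmem hxsmin φ φ' π hφpos hφsum hφ'pos hπpos hπsum R hRnonneg hRrow hφR η lam hη0 hη hlam0
    hlam1 x y htrack z xplus hz hxplus
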